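/- Let G be a finite simple graph that is a forest (equivalently, 1-degenerate: every subgraph of G has a vertex of degree at most 1). Then the edge set of G can be partitioned into ⌈Δ(G)/2⌉ linear forests, i.e., the linear arboricity of G equals ⌈Δ(G)/2⌉ when G has at least one edge. -/

import Mathlib

/-- A linear forest: a graph in which every connected component is a path,
equivalently every vertex has degree at most 2 and there are no cycles. -/
def IsLinearForest {V : Type*} (G : SimpleGraph V) : Prop :=
  G.IsAcyclic ∧ ∀ v : V, (G.neighborSet v).ncard ≤ 2

/-- A partition of the edge set of `G` into `t` linear forests (viewed as
spanning subgraphs). -/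
def IsLinearForestPartition {V : Type*} (G : SimpleGraph V) (t : ℕ)
    (F : Fin t → SimpleGraph V) : Prop :=
  (∀ i, IsLinearForest (F i)) ∧
  (Pairwise fun i j : Fin t => Disjoint (F i).edgeSet (F j).edgeSet) ∧
  (⋃ i, (F i).edgeSet) = G.edgeSet

/-- `G` is `k`-degenerate: every (nonempty) subgraph of `G` has a vertex of
degree at most `k`. -/
def KDegenerate {V : Type*} (G : SimpleGraph V) (k : ℕ) : Prop :=
  ∀ H : G.Subgraph, H.verts.Nonempty → ∃ v ∈ H.verts, (H.neighborSet v).ncard ≤ k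

/-!
Remove an edge `lp` at a leaf `l` (an end of a longest path) and decompose the rest of the forest
by induction into `k = ⌈Δ/2⌉` edge-disjoint spanning subgraphs of maximum degree at most `2`.
Fewer than `2k` edges of `G - lp` meet `p`, so some class meets `p` at most once; `l` is isolated
in every class, so `lp` can be added to that class. Each class lies in the forest `G`, hence is a
linear forest. Conversely, a vertex of degree `Δ` meets each linear forest in at most two edges.
-/

open Function

lemma Pairwise.disjoint_update_sup {ι α : Type*} [DecidableEq ι] [DistribLattice α] [OrderBot α]
    {f : ι → α} (hf : Pairwise (Disjoint on f)) {a : α} (ha : ∀ j, Disjoint (f j) a) (i : ι) :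
    Pairwise (Disjoint on update f i (f i ⊔ a)) := by
  intro j k hjk
  simp only [onFun, update_apply]
  split_ifs with hj hk hk
  · exact absurd (hj.trans hk.symm) hjk
  · exact disjoint_sup_left.2 ⟨hf (hj ▸ hjk), (ha k).symm⟩
  · exact disjoint_sup_right.2 ⟨hf (hk ▸ hjk), ha j⟩
  · exact hf hjk

lemma iSup_update_sup {ι α : Type*} [DecidableEq ι] [CompleteLattice α] (f : ι → α) (i : ι)
    (a : α) : ⨆ j, update f i (f i ⊔ a) j = (⨆ j, f j) ⊔ a := by
  refine le_antisymm (iSup_le fun j => ?_) (sup_le (iSup_mono fun j => ?_) ?_)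
  · rcases eq_or_ne j i with rfl | hj
    · rw [update_self]; exact sup_le_sup_right (le_iSup f j) a
    · rw [update_of_ne hj]; exact le_sup_of_le_left (le_iSup f j)
  · rcases eq_or_ne j i with rfl | hj
    · rw [update_self]; exact le_sup_left
    · rw [update_of_ne hj]
  · exact le_iSup_of_le i (by rw [update_self]; exact le_sup_right)

lemma Set.exists_ncard_lt_of_ncard_iUnion_lt_mul {α ι : Type*} [Fintype ι] {s : ι → Set α}
    (hs : ∀ i, (s i).Finite) (hdisj : Pairwise (Disjoint on s)) {d : ℕ}
    (hlt : (⋃ i, s i).ncard < d * Fintype.card ι) : ∃ i, (s i).ncard < d := by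
  by_contra! h
  rw [Set.ncard_iUnion_of_finite hs hdisj, finsum_eq_sum_of_fintype] at hlt
  have := Finset.sum_le_sum fun i (_ : i ∈ Finset.univ) => h i
  rw [Finset.sum_const, Finset.card_univ, smul_eq_mul, mul_comm] at this
  omega

namespace SimpleGraph

variable {V : Type*} {G : SimpleGraph V}

lemma ncard_neighborSet_eq_degree (G : SimpleGraph V) (v : V) [Fintype (G.neighborSet v)] :
    (G.neighborSet v).ncard = G.degree v := by
  rw [← coe_neighborFinset, Set.ncard_coe_finset, card_neighborFinset_eq_degree]

lemma neighborSet_edge_left {u v : V} (h : u ≠ v) : (edge u v).neighborSet u = {v} := by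
  ext w
  grind [mem_neighborSet]

lemma neighborSet_edge_of_ne {u v x : V} (hu : x ≠ u) (hv : x ≠ v) :
    (edge u v).neighborSet x = ∅ := by
  ext w
  simp [edge_adj, hu, hv]

lemma ncard_neighborSet_sup_edge_le {H : SimpleGraph V} {u v : V} {d : ℕ}
    (hH : ∀ x, (H.neighborSet x).ncard ≤ d) (hu : (H.neighborSet u).ncard < d)
    (hv : (H.neighborSet v).ncard < d) (x : V) : ((H ⊔ edge u v).neighborSet x).ncard ≤ d := by
  rcases eq_or_ne u v with rfl | huv
  · rw [sup_edge_self]; exact hH x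
  rw [neighborSet_sup]
  by_cases hxu : x = u
  · subst hxu
    rw [neighborSet_edge_left huv, Set.union_singleton]
    exact (Set.ncard_insert_le _ _).trans hu
  by_cases hxv : x = v
  · subst hxv
    rw [edge_comm, neighborSet_edge_left huv.symm, Set.union_singleton]
    exact (Set.ncard_insert_le _ _).trans hv
  rw [neighborSet_edge_of_ne hxu hxv, Set.union_empty]
  exact hH x

lemma IsAcyclic.exists_adj_forall_adj_eq [Finite V] (hG : G.IsAcyclic) (hne : G.edgeSet.Nonempty) :
    ∃ u v, G.Adj u v ∧ ∀ w, G.Adj u w → w = v := by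
  obtain ⟨⟨a, b⟩, hab : G.Adj a b⟩ := hne
  have : Nonempty V := ⟨a⟩
  obtain ⟨u, v, p, hp, hmax⟩ := Walk.exists_isPath_forall_isPath_length_le_length G
  have hnil : ¬p.Nil := by
    have : 1 ≤ p.length := hmax a b (.cons hab .nil) (by simp [hab.ne])
    rw [← Walk.length_eq_zero_iff]
    omega
  refine ⟨u, p.snd, p.adj_snd hnil, fun w hw => hG.eq_snd_of_adj_start hp hw ?_⟩
  by_contra hw'
  have := hmax w v _ (hp.cons (h := hw.symm) hw')
  simp at this

theorem IsAcyclic.exists_disjoint_iSup_eq_of_ncard_neighborSet_le [Finite V] {ι : Type*}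
    [Fintype ι] {d : ℕ} (hG : G.IsAcyclic)
    (hdeg : ∀ v, (G.neighborSet v).ncard ≤ d * Fintype.card ι) :
    ∃ F : ι → SimpleGraph V, Pairwise (Disjoint on F) ∧ ⨆ i, F i = G ∧
      ∀ i v, ((F i).neighborSet v).ncard ≤ d := by
  classical
  induction G using WellFoundedLT.induction with
  | _ G ih =>
  rcases G.edgeSet.eq_empty_or_nonempty with hempty | hne
  · refine ⟨fun _ => ⊥, fun _ _ _ => disjoint_bot_left, ?_, by simp⟩
    rw [iSup_bot, eq_comm, ← edgeSet_eq_empty, hempty]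
  obtain ⟨l, p, hlp, hleaf⟩ := hG.exists_adj_forall_adj_eq hne
  have hle : edge l p ≤ G := (edge_le_iff _).2 (Or.inr hlp)
  have hlt : G \ edge l p < G :=
    sdiff_lt hle (by simp [← edgeSet_eq_empty, edgeSet_edge_of_ne hlp.ne])
  obtain ⟨F, hdisj, hsup, hF⟩ := ih _ hlt (hG.anti sdiff_le)
    fun x => (Set.ncard_le_ncard (fun y hy => hy.1) (Set.toFinite _)).trans (hdeg x)
  have hFle (i : ι) : F i ≤ G \ edge l p := hsup ▸ le_iSup F i
  have hl (i : ι) : (F i).neighborSet l = ∅ := Set.eq_empty_of_forall_notMem fun w hw => by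
    obtain ⟨hGw, hw⟩ := hFle i hw
    exact hw (by simp [hleaf w hGw, edge_adj, hlp.ne])
  obtain ⟨i, hi⟩ : ∃ i, ((F i).neighborSet p).ncard < d := by
    refine Set.exists_ncard_lt_of_ncard_iUnion_lt_mul (fun _ => Set.toFinite _)
      (fun i j hij => disjoint_neighborSet.2 (hdisj hij) p) ?_
    rw [← neighborSet_iSup, hsup, neighborSet_sdiff, edge_comm, neighborSet_edge_left hlp.ne.symm,
      Set.ncard_sdiff_singleton_of_mem (show l ∈ G.neighborSet p from hlp.symm)]
    have := (Set.ncard_pos (s := G.neighborSet p) (Set.toFinite _)).2 ⟨l, hlp.symm⟩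
    have := hdeg p
    omega
  have hdisj_edge (j : ι) : Disjoint (F j) (edge l p) :=
    (disjoint_edge _).2 fun h => (hFle j h).2 (by simp [edge_adj, hlp.ne])
  refine ⟨update F i (F i ⊔ edge l p), hdisj.disjoint_update_sup hdisj_edge i,
    by rw [iSup_update_sup, hsup, sdiff_sup_cancel hle], fun j x => ?_⟩
  rcases eq_or_ne j i with rfl | hj
  · rw [update_self]
    exact ncard_neighborSet_sup_edge_le (hF j) (by rw [hl, Set.ncard_empty]; omega) hi x
  · rw [update_of_ne hj]
    exact hF j x

lemma IsAcyclic.isLinearForestPartition {t : ℕ} {F : Fin t → SimpleGraph V} (hG : G.IsAcyclic)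
    (hdisj : Pairwise (Disjoint on F)) (hsup : ⨆ i, F i = G)
    (hdeg : ∀ i v, ((F i).neighborSet v).ncard ≤ 2) : IsLinearForestPartition G t F :=
  ⟨fun i => ⟨hG.anti (hsup ▸ le_iSup F i), hdeg i⟩, fun _ _ hij => disjoint_edgeSet.2 (hdisj hij),
    by rw [← edgeSet_iSup, hsup]⟩

end SimpleGraph

lemma IsLinearForestPartition.ncard_neighborSet_le {V : Type*} {G : SimpleGraph V}
    {t : ℕ} {F : Fin t → SimpleGraph V} (h : IsLinearForestPartition G t F) (v : V) :
    (G.neighborSet v).ncard ≤ 2 * t := by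
  have hsup : ⨆ i, F i = G := by rw [← SimpleGraph.edgeSet_inj, SimpleGraph.edgeSet_iSup, h.2.2]
  calc (G.neighborSet v).ncard
      ≤ ∑ i, ((F i).neighborSet v).ncard := by
        rw [← hsup, SimpleGraph.neighborSet_iSup]; exact Set.ncard_iUnion_le_of_fintype _
    _ ≤ ∑ _i : Fin t, 2 := Finset.sum_le_sum fun i _ => (h.1 i).2 v
    _ = 2 * t := by simp [mul_comm]

open SimpleGraph in
theorem linear_arboricity_of_forest_general
    {V : Type*} [Fintype V] (G : SimpleGraph V) [DecidableRel G.Adj]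
    (hforest : G.IsAcyclic) :
    (∃ F : Fin ((G.maxDegree + 1) / 2) → SimpleGraph V,
        IsLinearForestPartition G ((G.maxDegree + 1) / 2) F) ∧
    (G.edgeSet.Nonempty →
      ∀ s : ℕ, (∃ F : Fin s → SimpleGraph V, IsLinearForestPartition G s F) →
        (G.maxDegree + 1) / 2 ≤ s) := by
  refine ⟨?_, fun _ s ⟨F, hF⟩ => ?_⟩
  · obtain ⟨F, hdisj, hsup, hdeg⟩ :=
      hforest.exists_disjoint_iSup_eq_of_ncard_neighborSet_le
        (ι := Fin ((G.maxDegree + 1) / 2)) (d := 2) fun v => by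
          rw [ncard_neighborSet_eq_degree, Fintype.card_fin]
          have := G.degree_le_maxDegree v
          omega
    exact ⟨F, hforest.isLinearForestPartition hdisj hsup hdeg⟩
  · have := G.maxDegree_le_of_forall_degree_le (2 * s) fun v =>
      ncard_neighborSet_eq_degree G v ▸ hF.ncard_neighborSet_le v
    omega

/-- A forest `G` (a 1-degenerate graph) has a partition of its edge set into
`⌈Δ(G)/2⌉` linear forests; hence, when `G` has at least one edge, its linear
arboricity equals `⌈Δ(G)/2⌉`. -/
theorem linear_arboricity_of_forest
    {V : Type*} [Fintype V] [DecidableEq V] (G : SimpleGraph V) [DecidableRel G.Adj]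
    (hforest : G.IsAcyclic) :
    (∃ F : Fin ((G.maxDegree + 1) / 2) → SimpleGraph V,
        IsLinearForestPartition G ((G.maxDegree + 1) / 2) F) ∧
    (G.edgeSet.Nonempty →
      ∀ s : ℕ, (∃ F : Fin s → SimpleGraph V, IsLinearForestPartition G s F) →
        (G.maxDegree + 1) / 2 ≤ s) :=
  linear_arboricity_of_forest_general G hforest
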